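/- Let p > 1 and α₁, α₂ > 0. The measure on (1/(√p+1)², 1/(√p−1)²) with density √((x − 1/(√p+1)²)(1/(√p−1)² − x))/(2πx²) · (α₁ + α₂/x) is a probability measure if and only if α₁ + α₂·p = p − 1. -/

import Mathlib

open MeasureTheory Set

/-- The measure on `(1/(√p+1)², 1/(√p-1)²)` with density
`√((x - 1/(√p+1)²)(1/(√p-1)² - x))/(2πx²) · (α₁ + α₂/x)`. -/
noncomputable def invFpMixture (p α₁ α₂ : ℝ) : Measure ℝ :=
  MeasureTheory.volume.withDensity
    (fun x => ENNReal.ofReal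
      ((Set.Ioo (((Real.sqrt p + 1) ^ 2)⁻¹) (((Real.sqrt p - 1) ^ 2)⁻¹)).indicator
        (fun x =>
          Real.sqrt ((x - ((Real.sqrt p + 1) ^ 2)⁻¹) * (((Real.sqrt p - 1) ^ 2)⁻¹ - x)) /
              (2 * Real.pi * x ^ 2) * (α₁ + α₂ / x)) x))

/-! The density is `(α₁ f₂ + α₂ f₃) / (2π)` with `fₙ x = √((x - a)(b - x)) / xⁿ`, and both pieces
have elementary antiderivatives built from `arcsin ((2x - a - b)/(b - a))`, its pullback
`arcsin ((a + b - 2ab/x)/(b - a))` under the involution `x ↦ ab/x` of `[a, b]`, and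
`√((x - a)(b - x)) / xⁿ`. With `s = √(ab)` this gives `∫ₐᵇ f₂ = π ((a + b)/(2s) - 1)` and
`∫ₐᵇ f₃ = π (b - a)² / (8s³)`. For `a = (√p + 1)⁻²`, `b = (√p - 1)⁻²` one has `s = 1/(p - 1)`,
and the total mass comes out as `(α₁ + α₂ p)/(p - 1)`. -/

open Real

lemma hasDerivAt_arcsin_comp_of_one_sub_sq {f : ℝ → ℝ} {f' c x : ℝ} (hf : HasDerivAt f f' x)
    (hc : 0 < c) (h : 1 - f x ^ 2 = c ^ 2) :
    HasDerivAt (fun y => arcsin (f y)) (f' / c) x := by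
  have hlt : f x ^ 2 < 1 := by nlinarith
  have h₁ : f x ≠ -1 := fun h' => by simp [h'] at hlt
  have h₂ : f x ≠ 1 := fun h' => by simp [h'] at hlt
  refine ((hasDerivAt_arcsin h₁ h₂).comp x hf).congr_deriv ?_
  rw [h, sqrt_sq hc.le, one_div_mul_eq_div]

section

variable {a b : ℝ}

lemma hasDerivAt_sqrt_mul_sub {x : ℝ} (hx : x ∈ Ioo a b) :
    HasDerivAt (fun y => √((y - a) * (b - y)))
      ((a + b - 2 * x) / (2 * √((x - a) * (b - x)))) x := by
  have hpoly : HasDerivAt (fun y => (y - a) * (b - y)) (a + b - 2 * x) x := by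
    refine (((hasDerivAt_id x).sub_const a).mul ((hasDerivAt_id x).const_sub b)).congr_deriv ?_
    simp only [id_eq]; ring
  exact hpoly.sqrt (mul_pos (sub_pos.2 hx.1) (sub_pos.2 hx.2)).ne'

lemma hasDerivAt_arcsin_affine {x : ℝ} (hx : x ∈ Ioo a b) :
    HasDerivAt (fun y => arcsin ((2 * y - a - b) / (b - a))) (1 / √((x - a) * (b - x))) x := by
  have hba : 0 < b - a := by linarith [hx.1, hx.2]
  have hR : 0 < (x - a) * (b - x) := mul_pos (sub_pos.2 hx.1) (sub_pos.2 hx.2)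
  have hu : HasDerivAt (fun y => (2 * y - a - b) / (b - a)) (2 / (b - a)) x := by
    simpa using ((((hasDerivAt_id x).const_mul 2).sub_const a).sub_const b).div_const (b - a)
  convert hasDerivAt_arcsin_comp_of_one_sub_sq hu (c := 2 * √((x - a) * (b - x)) / (b - a))
    (by positivity) ?_ using 1
  · field_simp
  · rw [div_pow, div_pow, mul_pow, sq_sqrt hR.le]
    field_simp
    ring

lemma hasDerivAt_sqrt_mul_sub_div_pow {x : ℝ} (ha : 0 < a) (hx : x ∈ Ioo a b) (n : ℕ) :
    HasDerivAt (fun y => √((y - a) * (b - y)) / y ^ n)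
      (((a + b - 2 * x) * x - 2 * n * ((x - a) * (b - x))) /
        (2 * √((x - a) * (b - x)) * x ^ (n + 1))) x := by
  have hx0 : 0 < x := ha.trans hx.1
  have hR : 0 < (x - a) * (b - x) := mul_pos (sub_pos.2 hx.1) (sub_pos.2 hx.2)
  have ht0 : 0 < √((x - a) * (b - x)) := sqrt_pos.2 hR
  have ht : √((x - a) * (b - x)) ^ 2 = (x - a) * (b - x) := sq_sqrt hR.le
  refine ((hasDerivAt_sqrt_mul_sub hx).div (hasDerivAt_pow n x) (by positivity)).congr_deriv ?_
  rcases n with _ | n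
  · field_simp
    rw [ht]
    ring
  · simp only [Nat.add_sub_cancel, pow_succ]
    field_simp
    rw [ht]
    ring

variable {s : ℝ}

lemma hasDerivAt_arcsin_moebius {x : ℝ} (ha : 0 < a) (hs : 0 < s) (hs2 : s ^ 2 = a * b)
    (hx : x ∈ Ioo a b) :
    HasDerivAt (fun y => arcsin ((a + b - 2 * a * b / y) / (b - a)))
      (s / (x * √((x - a) * (b - x)))) x := by
  have hx0 : 0 < x := ha.trans hx.1
  have hba : 0 < b - a := by linarith [hx.1, hx.2]
  have hR : 0 < (x - a) * (b - x) := mul_pos (sub_pos.2 hx.1) (sub_pos.2 hx.2)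
  have hu : HasDerivAt (fun y => (a + b - 2 * a * b / y) / (b - a))
      (2 * a * b / x ^ 2 / (b - a)) x := by
    have := (((hasDerivAt_inv hx0.ne').const_mul (2 * a * b)).const_sub (a + b)).div_const (b - a)
    simp only [← div_eq_mul_inv] at this
    refine this.congr_deriv ?_
    ring
  convert hasDerivAt_arcsin_comp_of_one_sub_sq hu
    (c := 2 * s * √((x - a) * (b - x)) / ((b - a) * x)) (by positivity) ?_ using 1
  · rw [show 2 * a * b = 2 * s ^ 2 by rw [hs2]; ring]
    field_simp
  · rw [div_pow, div_pow, mul_pow, mul_pow, sq_sqrt hR.le, hs2]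
    field_simp
    ring

lemma hasDerivAt_antideriv_sqrt_div_sq {x : ℝ} (ha : 0 < a) (hs : 0 < s) (hs2 : s ^ 2 = a * b)
    (hx : x ∈ Ioo a b) :
    HasDerivAt (fun y => -arcsin ((2 * y - a - b) / (b - a))
        + (a + b) / (2 * s) * arcsin ((a + b - 2 * a * b / y) / (b - a))
        - √((y - a) * (b - y)) / y)
      (√((x - a) * (b - x)) / x ^ 2) x := by
  have hx0 : 0 < x := ha.trans hx.1
  have hR : 0 < (x - a) * (b - x) := mul_pos (sub_pos.2 hx.1) (sub_pos.2 hx.2)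
  have hdiv := hasDerivAt_sqrt_mul_sub_div_pow ha hx 1
  simp only [pow_one] at hdiv
  refine ((((hasDerivAt_arcsin_affine hx).neg).add
    ((hasDerivAt_arcsin_moebius ha hs hs2 hx).const_mul ((a + b) / (2 * s)))).sub
    hdiv).congr_deriv ?_
  have ht : √((x - a) * (b - x)) ^ 2 = (x - a) * (b - x) := sq_sqrt hR.le
  have ht0 : 0 < √((x - a) * (b - x)) := sqrt_pos.2 hR
  field_simp
  rw [ht]
  ring

lemma hasDerivAt_antideriv_sqrt_div_cube {x : ℝ} (ha : 0 < a) (hs : 0 < s) (hs2 : s ^ 2 = a * b)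
    (hx : x ∈ Ioo a b) :
    HasDerivAt (fun y => (b - a) ^ 2 / (8 * s ^ 3) * arcsin ((a + b - 2 * a * b / y) / (b - a))
        + (a + b) / (4 * s ^ 2) * (√((y - a) * (b - y)) / y)
        - √((y - a) * (b - y)) / y ^ 2 / 2)
      (√((x - a) * (b - x)) / x ^ 3) x := by
  have hx0 : 0 < x := ha.trans hx.1
  have hR : 0 < (x - a) * (b - x) := mul_pos (sub_pos.2 hx.1) (sub_pos.2 hx.2)
  have hdiv := hasDerivAt_sqrt_mul_sub_div_pow ha hx 1
  simp only [pow_one] at hdiv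
  refine ((((hasDerivAt_arcsin_moebius ha hs hs2 hx).const_mul ((b - a) ^ 2 / (8 * s ^ 3))).add
    (hdiv.const_mul ((a + b) / (4 * s ^ 2)))).sub
    ((hasDerivAt_sqrt_mul_sub_div_pow ha hx 2).div_const 2)).congr_deriv ?_
  have ht : √((x - a) * (b - x)) ^ 2 = (x - a) * (b - x) := sq_sqrt hR.le
  have ht0 : 0 < √((x - a) * (b - x)) := sqrt_pos.2 hR
  field_simp
  rw [ht, hs2]
  ring

lemma continuousOn_sqrt_mul_sub_div_pow (ha : 0 < a) (n : ℕ) :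
    ContinuousOn (fun x => √((x - a) * (b - x)) / x ^ n) (Icc a b) := by
  fun_prop (disch := exact fun y hy => pow_ne_zero _ (ha.trans_le hy.1).ne')

lemma arcsin_moebius_left (ha : 0 < a) (hab : a < b) :
    arcsin ((a + b - 2 * a * b / a) / (b - a)) = -(π / 2) := by
  have hba : b - a ≠ 0 := (sub_pos.2 hab).ne'
  rw [← arcsin_neg_one]
  congr 1
  field_simp
  ring

lemma arcsin_moebius_right (ha : 0 < a) (hab : a < b) :
    arcsin ((a + b - 2 * a * b / b) / (b - a)) = π / 2 := by
  have hba : b - a ≠ 0 := (sub_pos.2 hab).ne'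
  have hb : b ≠ 0 := (ha.trans hab).ne'
  rw [← arcsin_one]
  congr 1
  field_simp
  ring

lemma integral_sqrt_mul_sub_div_sq (ha : 0 < a) (hab : a < b) (hs : 0 < s)
    (hs2 : s ^ 2 = a * b) :
    ∫ x in a..b, √((x - a) * (b - x)) / x ^ 2 = π * ((a + b) / (2 * s) - 1) := by
  have h0 : ∀ y ∈ Icc a b, y ≠ 0 := fun y hy => (ha.trans_le hy.1).ne'
  have hpow : ∀ n : ℕ, ∀ y ∈ Icc a b, y ^ n ≠ 0 := fun n y hy => pow_ne_zero n (h0 y hy)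
  rw [intervalIntegral.integral_eq_sub_of_hasDerivAt_of_le hab.le
    (by fun_prop (disch := first | exact h0 | exact hpow _))
    (fun x hx => hasDerivAt_antideriv_sqrt_div_sq ha hs hs2 hx)
    ((continuousOn_sqrt_mul_sub_div_pow ha 2).intervalIntegrable_of_Icc hab.le)]
  have hba : b - a ≠ 0 := (sub_pos.2 hab).ne'
  have h1 : (2 * b - a - b) / (b - a) = 1 := by field_simp; ring
  have h2 : (2 * a - a - b) / (b - a) = -1 := by field_simp; ring
  simp only [h1, h2, arcsin_moebius_left ha hab, arcsin_moebius_right ha hab, arcsin_one,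
    arcsin_neg_one, sub_self, mul_zero, zero_mul, sqrt_zero, zero_div]
  ring

lemma integral_sqrt_mul_sub_div_cube (ha : 0 < a) (hab : a < b) (hs : 0 < s)
    (hs2 : s ^ 2 = a * b) :
    ∫ x in a..b, √((x - a) * (b - x)) / x ^ 3 = π * (b - a) ^ 2 / (8 * s ^ 3) := by
  have h0 : ∀ y ∈ Icc a b, y ≠ 0 := fun y hy => (ha.trans_le hy.1).ne'
  have hpow : ∀ n : ℕ, ∀ y ∈ Icc a b, y ^ n ≠ 0 := fun n y hy => pow_ne_zero n (h0 y hy)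
  rw [intervalIntegral.integral_eq_sub_of_hasDerivAt_of_le hab.le
    (by fun_prop (disch := first | exact h0 | exact hpow _))
    (fun x hx => hasDerivAt_antideriv_sqrt_div_cube ha hs hs2 hx)
    ((continuousOn_sqrt_mul_sub_div_pow ha 3).intervalIntegrable_of_Icc hab.le)]
  simp only [arcsin_moebius_left ha hab, arcsin_moebius_right ha hab, sub_self, mul_zero,
    zero_mul, sqrt_zero, zero_div]
  ring

lemma integral_sqrt_mul_sub_mixture (ha : 0 < a) (hab : a < b) (hs : 0 < s)
    (hs2 : s ^ 2 = a * b) (α₁ α₂ : ℝ) :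
    ∫ x in a..b, √((x - a) * (b - x)) / (2 * π * x ^ 2) * (α₁ + α₂ / x)
      = (α₁ * ((a + b) / (2 * s) - 1) + α₂ * (b - a) ^ 2 / (8 * s ^ 3)) / 2 := by
  have hsplit : ∀ x, √((x - a) * (b - x)) / (2 * π * x ^ 2) * (α₁ + α₂ / x)
      = (α₁ * (√((x - a) * (b - x)) / x ^ 2) + α₂ * (√((x - a) * (b - x)) / x ^ 3)) / (2 * π) := by
    intro x
    rcases eq_or_ne x 0 with rfl | hx
    · simp
    · field_simp
  have hint : ∀ n, IntervalIntegrable (fun x => √((x - a) * (b - x)) / x ^ n) volume a b :=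
    fun n => (continuousOn_sqrt_mul_sub_div_pow ha n).intervalIntegrable_of_Icc hab.le
  simp_rw [hsplit]
  rw [intervalIntegral.integral_div,
    intervalIntegral.integral_add ((hint 2).const_mul α₁) ((hint 3).const_mul α₂),
    intervalIntegral.integral_const_mul, intervalIntegral.integral_const_mul,
    integral_sqrt_mul_sub_div_sq ha hab hs hs2, integral_sqrt_mul_sub_div_cube ha hab hs hs2]
  field_simp

end

lemma withDensity_ofReal_indicator_Ioo_univ {a b : ℝ} {f : ℝ → ℝ} (hab : a ≤ b)
    (hf : ContinuousOn f (Icc a b)) (hnn : ∀ x ∈ Ioo a b, 0 ≤ f x) :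
    volume.withDensity (fun x => ENNReal.ofReal ((Ioo a b).indicator f x)) univ
      = ENNReal.ofReal (∫ x in a..b, f x) := by
  have hint : Integrable ((Ioo a b).indicator f) :=
    (integrable_indicator_iff measurableSet_Ioo).2
      (hf.integrableOn_Icc.mono_set Ioo_subset_Icc_self)
  rw [withDensity_apply _ MeasurableSet.univ, Measure.restrict_univ,
    ← ofReal_integral_eq_lintegral_ofReal hint (Filter.Eventually.of_forall (indicator_nonneg hnn)),
    MeasureTheory.integral_indicator measurableSet_Ioo, ← integral_Ioc_eq_integral_Ioo,
    intervalIntegral.integral_of_le hab]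

lemma invFpMixture_apply_univ {p α₁ α₂ : ℝ} (hp : 1 < p) (hα₁ : 0 ≤ α₁) (hα₂ : 0 ≤ α₂) :
    invFpMixture p α₁ α₂ univ = ENNReal.ofReal ((α₁ + α₂ * p) / (p - 1)) := by
  have hq : 1 < √p := by simpa using sqrt_lt_sqrt zero_le_one hp
  have hqp : √p ^ 2 = p := sq_sqrt (by linarith)
  set q := √p
  have hq1 : q - 1 ≠ 0 := (sub_pos.2 hq).ne'
  have ha : 0 < ((q + 1) ^ 2)⁻¹ := by positivity
  have hab : ((q + 1) ^ 2)⁻¹ < ((q - 1) ^ 2)⁻¹ := by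
    apply inv_strictAnti₀ (by positivity)
    nlinarith
  have hq2 : 0 < q ^ 2 - 1 := by nlinarith
  have hs : 0 < (q ^ 2 - 1)⁻¹ := inv_pos.2 hq2
  have hs2 : (q ^ 2 - 1)⁻¹ ^ 2 = ((q + 1) ^ 2)⁻¹ * ((q - 1) ^ 2)⁻¹ := by
    rw [← mul_inv, ← mul_pow, ← inv_pow]
    ring
  have h0 : ∀ y ∈ Icc ((q + 1) ^ 2)⁻¹ ((q - 1) ^ 2)⁻¹, y ≠ 0 := fun y hy => (ha.trans_le hy.1).ne'
  have hden : ∀ y ∈ Icc ((q + 1) ^ 2)⁻¹ ((q - 1) ^ 2)⁻¹, 2 * π * y ^ 2 ≠ 0 :=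
    fun y hy => by have := h0 y hy; positivity
  rw [invFpMixture, withDensity_ofReal_indicator_Ioo_univ hab.le
    (by fun_prop (disch := first | exact h0 | exact hden))
    (fun x hx => by have := ha.trans hx.1; positivity),
    integral_sqrt_mul_sub_mixture ha hab hs hs2, ← hqp]
  congr 1
  field_simp [hq2.ne']
  ring

/-- For `p > 1` and `α₁, α₂ > 0`, the above measure is a probability measure
if and only if `α₁ + α₂·p = p - 1`. -/
theorem invFpMixture_isProbability_iff (p α₁ α₂ : ℝ) (hp : 1 < p)
    (hα₁ : 0 < α₁) (hα₂ : 0 < α₂) :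
    IsProbabilityMeasure (invFpMixture p α₁ α₂) ↔ α₁ + α₂ * p = p - 1 := by
  rw [isProbabilityMeasure_iff, invFpMixture_apply_univ hp hα₁.le hα₂.le, ENNReal.ofReal_eq_one,
    div_eq_one_iff_eq (sub_pos.2 hp).ne']
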